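/- If w is a nonzero word in the free algebra ℚ⟨e_0,e_1,e_z⟩ containing at least one letter e_z, then the iterated integral L(w)(z) = ∫_{0<t_1<⋯<t_m<1} ∏_i dt_i/(t_i−a_i) tends to 0 as |z| → ∞ (z ∈ ℂ \ [0,1]), provided w is admissible (i.e., w ∈ 𝒜^1). -/

import Mathlib

open scoped BigOperators
open MeasureTheory Filter

noncomputable section

/-- Iterated integral over the open simplex `0 < t₁ < ⋯ < t_m < 1` of `∏ᵢ 1/(tᵢ - aᵢ)`. -/
def itInt (a : List ℂ) : ℂ :=
  ∫ t in {t : Fin a.length → ℝ | StrictMono t ∧ ∀ i, t i ∈ Set.Ioo (0:ℝ) 1},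
    ∏ i : Fin a.length, ((t i : ℂ) - a.get i)⁻¹

/-- Multiple zeta value attached to a list of exponents. -/
def mzv (k : List ℕ) : ℝ :=
  ∑' f : {f : Fin k.length → ℕ+ // StrictMono f},
    ∏ i : Fin k.length, (((f.1 i : ℕ) : ℝ) ^ (k.get i))⁻¹

/-- Letters: `0 ↦ e₀`, `1 ↦ e₁`, `2 ↦ e_z`. -/
abbrev Ltr := Fin 3

/-- The free noncommutative algebra `ℚ⟨e₀,e₁,e_z⟩` realized as a monoid algebra. -/
abbrev Alg := MonoidAlgebra ℚ (FreeMonoid Ltr)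

/-- The word (monomial) corresponding to a list of letters. -/
def wd (l : List Ltr) : Alg := MonoidAlgebra.of ℚ (FreeMonoid Ltr) (FreeMonoid.ofList l)

/-- Padded letter sequence: `a₀ = 0`, `a_{n+1} = 1`. -/
def pad (l : List Ltr) : ℕ → Ltr := fun i => (((0:Ltr) :: (l ++ [1])).getD i 0)

/-- Unordered-pair Kronecker delta. -/
def dl (a b c d : Ltr) : ℚ := if (a = c ∧ b = d) ∨ (a = d ∧ b = c) then 1 else 0

/-- `∂_{z,b}` on a single word. -/
def delWord (b : Ltr) (l : List Ltr) : Alg :=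
  ∑ i ∈ Finset.range l.length,
    (dl (pad l (i+1)) (pad l (i+2)) 2 b - dl (pad l i) (pad l (i+1)) 2 b) •
      wd (l.eraseIdx i)

/-- The linear operator `∂_{z,b}` on `ℚ⟨e₀,e₁,e_z⟩`. -/
def del (b : Ltr) : Alg →ₗ[ℚ] Alg :=
  (Finsupp.lift Alg ℚ (FreeMonoid Ltr) (fun l => delWord b (FreeMonoid.toList l))).comp
    (MonoidAlgebra.coeffLinearEquiv ℚ).toLinearMap

/-- Evaluation of letters at a point `z`. -/
def ev (z : ℂ) : Ltr → ℂ := fun i => if i = 0 then 0 else if i = 1 then 1 else z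

/-- The linear map `L` (depending on `z`) given by iterated integrals. -/
def LL (z : ℂ) : Alg →ₗ[ℚ] ℂ :=
  (Finsupp.lift ℂ ℚ (FreeMonoid Ltr) (fun l => itInt ((FreeMonoid.toList l).map (ev z)))).comp
    (MonoidAlgebra.coeffLinearEquiv ℚ).toLinearMap

/-- `A_n = (e₁e₀)^n`. -/
def Aw : ℕ → List Ltr
  | 0 => []
  | n+1 => 1 :: 0 :: Aw n

/-- `B_n = (e₁e₀)^n e₁`. -/
def Bw (n : ℕ) : List Ltr := Aw n ++ [1]

/-- `Ā_n = (e₀e₁)^n`. -/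
def Abar : ℕ → List Ltr
  | 0 => []
  | n+1 => 0 :: 1 :: Abar n

/-- `B̄_n = (e₀e₁)^n e₀`. -/
def Bbar (n : ℕ) : List Ltr := Abar n ++ [0]

/-- The single letter `e_z`. -/
def ezw : List Ltr := [2]

/-- Flip `e₀ ↔ e₁` (fixing `e_z`, which never occurs in duality words). -/
def flipL : Ltr → Ltr := fun i => if i = 0 then 1 else if i = 1 then 0 else 2

/-- The duality anti-automorphism `τ` as a linear map. -/
def tau : Alg →ₗ[ℚ] Alg :=
  (Finsupp.lift Alg ℚ (FreeMonoid Ltr)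
    (fun l => ((-1 : ℚ) ^ (FreeMonoid.toList l).length) •
      wd (((FreeMonoid.toList l).reverse).map flipL))).comp
    (MonoidAlgebra.coeffLinearEquiv ℚ).toLinearMap

/-- `Δ(w) = w - τ(w)`. -/
def Del (x : Alg) : Alg := x - tau x

/-- The segment `[0,1] ⊂ ℂ`. -/
def seg : Set ℂ := (fun t : ℝ => (t : ℂ)) '' Set.Icc 0 1

/-- Admissibility of a word: it is empty, or starts with `e₁` or `e_z`
and ends with `e₀` or `e_z`. -/
def adm (l : List Ltr) : Prop :=
  ∀ h : l ≠ [], (l.head h = 1 ∨ l.head h = 2) ∧ (l.getLast h = 0 ∨ l.getLast h = 2)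

/-- The subspace `𝒜¹` spanned by admissible words. -/
def A1 : Submodule ℚ Alg := Submodule.span ℚ {x | ∃ l, adm l ∧ x = wd l}

/-- The span of words containing the letter `e_z` (the ideal `ℐ = 𝒜e_z𝒜`). -/
def Iz : Submodule ℚ Alg := Submodule.span ℚ {x | ∃ l : List Ltr, (2:Ltr) ∈ l ∧ x = wd l}

/-- `F_{ee}(m,n)`. -/
def Fee (s : ℕ) (m n : ℤ) : Alg :=
  if m < 0 ∨ n < 0 then 0 else
  wd (Aw s ++ Bbar m.toNat ++ ezw ++ Aw n.toNat)
    + wd (Aw m.toNat ++ ezw ++ Aw s ++ ezw ++ Aw n.toNat)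
    + wd (Aw m.toNat ++ ezw ++ Abar s ++ ezw ++ Aw n.toNat)
    + wd (Aw m.toNat ++ ezw ++ Bw n.toNat ++ Aw s)
    - wd (Bw (s + m.toNat) ++ ezw ++ Aw n.toNat)
    - wd (Aw m.toNat ++ ezw ++ Bbar (s + n.toNat))

/-- `F_{oe}(m,n)`. -/
def Foe (s : ℕ) (m n : ℤ) : Alg :=
  if m < 0 ∨ n < 0 then 0 else
  wd (Aw s ++ Abar (m.toNat + 1) ++ ezw ++ Aw n.toNat)
    + wd (Bw m.toNat ++ ezw ++ Aw s ++ ezw ++ Aw n.toNat)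
    + wd (Bw m.toNat ++ ezw ++ Abar s ++ ezw ++ Aw n.toNat)
    + wd (Bw m.toNat ++ ezw ++ Bw n.toNat ++ Aw s)
    - wd (Aw (s + m.toNat + 1) ++ ezw ++ Aw n.toNat)
    - wd (Bw m.toNat ++ ezw ++ Bbar (s + n.toNat))

/-- `F_{eo}(m,n)`. -/
def Feo (s : ℕ) (m n : ℤ) : Alg :=
  if m < 0 ∨ n < 0 then 0 else
  wd (Aw s ++ Bbar m.toNat ++ ezw ++ Bbar n.toNat)
    + wd (Aw m.toNat ++ ezw ++ Aw s ++ ezw ++ Bbar n.toNat)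
    + wd (Aw m.toNat ++ ezw ++ Abar s ++ ezw ++ Bbar n.toNat)
    + wd (Aw m.toNat ++ ezw ++ Abar (n.toNat + 1) ++ Aw s)
    - wd (Bw (s + m.toNat) ++ ezw ++ Bbar n.toNat)
    - wd (Aw m.toNat ++ ezw ++ Aw (s + n.toNat + 1))

/-- `F_{oo}(m,n)`. -/
def Foo (s : ℕ) (m n : ℤ) : Alg :=
  if m < 0 ∨ n < 0 then 0 else
  wd (Aw s ++ Abar (m.toNat + 1) ++ ezw ++ Bbar n.toNat)
    + wd (Bw m.toNat ++ ezw ++ Aw s ++ ezw ++ Bbar n.toNat)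
    + wd (Bw m.toNat ++ ezw ++ Abar s ++ ezw ++ Bbar n.toNat)
    + wd (Bw m.toNat ++ ezw ++ Abar (n.toNat + 1) ++ Aw s)
    - wd (Aw (s + m.toNat + 1) ++ ezw ++ Bbar n.toNat)
    - wd (Bw m.toNat ++ ezw ++ Aw (s + n.toNat + 1))


/-! For `‖z‖ ≥ 2` and `0 < t < 1`, each factor `‖(t - aᵢ)⁻¹‖` of the integrand is bounded by
the `z`-free majorant `t⁻¹`, `(1 - t)⁻¹` or `1` according as the letter is `e₀`, `e₁` or `e_z`,
and the factor of an `e_z` even by `2 / ‖z‖`. Hence `‖L(w)(z)‖ ≤ 2 / ‖z‖ * J(w)` with `J(w)` the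
iterated integral of the majorants, and it remains to see `J(w) < ∞` for admissible `w`.
Integrating from the right, `J` of a nonempty word not ending in `e₁` over `x < t₁ < ⋯ < 1` is
`O((1 - x) x^(-1/2))`: the factor `1 - x` absorbs a leading `(1 - t)⁻¹`, and `x^(-1/2)` absorbs
the logarithms produced by leading `t⁻¹`s, because `t⁻¹ (1 - t) t^(-1/2) ≤ t^(-3/2)`, whose
integral over `(x, 1)` is at most `2 (1 - x) x^(-1/2)`. -/

open scoped ENNReal
open Set

def openSimplex (n : ℕ) (x : ℝ) : Set (Fin n → ℝ) := {t | StrictMono t ∧ ∀ i, t i ∈ Ioo x 1}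

def iterLIntegral {α : Type*} (φ : α → ℝ → ℝ≥0∞) : List α → ℝ → ℝ≥0∞
  | [], _ => 1
  | a :: l, x => ∫⁻ t in Ioo x 1, φ a t * iterLIntegral φ l t

lemma measurableSet_openSimplex (n : ℕ) (x : ℝ) : MeasurableSet (openSimplex n x) := by
  simp only [openSimplex, StrictMono, ofPred_and, ofPred_forall]
  refine .inter (.iInter fun i => .iInter fun j => .iInter fun _ => ?_)
    (.iInter fun i => measurable_pi_apply i measurableSet_Ioo)
  exact measurableSet_lt (measurable_pi_apply i) (measurable_pi_apply j)

lemma openSimplex_zero (x : ℝ) : openSimplex 0 x = univ := by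
  simp [openSimplex, Subsingleton.strictMono]

lemma cons_mem_openSimplex {n : ℕ} {x s : ℝ} {u : Fin n → ℝ} :
    Fin.cons s u ∈ openSimplex (n + 1) x ↔ s ∈ Ioo x 1 ∧ u ∈ openSimplex n s := by
  simp only [openSimplex, mem_ofPred_eq, Fin.strictMono_cons, Fin.forall_fin_succ, Fin.cons_zero,
    Fin.cons_succ, mem_Ioo]
  grind

lemma setLIntegral_openSimplex_prod {α : Type*} {φ : α → ℝ → ℝ≥0∞} (hφ : ∀ a, Measurable (φ a))
    (l : List α) (x : ℝ) :
    ∫⁻ t in openSimplex l.length x, ∏ i, φ (l.get i) (t i) = iterLIntegral φ l x := by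
  induction l generalizing x with
  | nil => simp [iterLIntegral, openSimplex_zero, volume_pi]
  | cons a l ih =>
    change ∫⁻ t in openSimplex (l.length + 1) x, ∏ i : Fin (l.length + 1), φ ((a :: l).get i) (t i)
      = _
    have hpres := (volume_preserving_piFinSuccAbove (fun _ : Fin (l.length + 1) => ℝ) 0).symm
    rw [← lintegral_indicator (measurableSet_openSimplex _ x),
      ← hpres.lintegral_comp_emb (MeasurableEquiv.measurableEmbedding _),
      Measure.volume_eq_prod, lintegral_prod _ ?hm, iterLIntegral,
      ← lintegral_indicator measurableSet_Ioo]
    congr 1 with s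
    simp only [MeasurableEquiv.piFinSuccAbove_symm_apply, Fin.insertNthEquiv, Equiv.coe_fn_mk,
      Fin.insertNth_zero']
    by_cases hs : s ∈ Ioo x 1
    · rw [indicator_of_mem hs, ← ih, ← lintegral_indicator (measurableSet_openSimplex _ _),
        ← lintegral_const_mul _
          (Measurable.indicator (by fun_prop) (measurableSet_openSimplex _ _))]
      congr 1 with u
      by_cases hu : u ∈ openSimplex l.length s <;>
        simp [indicator, cons_mem_openSimplex, hs, hu, Fin.prod_univ_succ]
    · simp [indicator, cons_mem_openSimplex, hs]
    case hm =>
      exact ((Measurable.indicator (by fun_prop) (measurableSet_openSimplex _ x)).comp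
        hpres.measurable).aemeasurable

section iterLIntegral

variable {α : Type*} {φ ψ : α → ℝ → ℝ≥0∞}

lemma iterLIntegral_map {β : Type*} (φ : β → ℝ → ℝ≥0∞) (f : α → β) (l : List α) (x : ℝ) :
    iterLIntegral φ (l.map f) x = iterLIntegral (fun a => φ (f a)) l x := by
  induction l generalizing x with
  | nil => rfl
  | cons a l ih => simp only [List.map_cons, iterLIntegral, ih]

lemma iterLIntegral_mono (h : ∀ a, ∀ t ∈ Ioo (0 : ℝ) 1, φ a t ≤ ψ a t) (l : List α) {x : ℝ}
    (hx : 0 ≤ x) : iterLIntegral φ l x ≤ iterLIntegral ψ l x := by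
  induction l generalizing x with
  | nil => rfl
  | cons a l ih =>
    exact setLIntegral_mono' measurableSet_Ioo fun t ht =>
      mul_le_mul' (h a t ⟨hx.trans_lt ht.1, ht.2⟩) (ih (hx.trans ht.1.le))

lemma iterLIntegral_le_mul_of_mem {b : α} {ε : ℝ≥0∞} (hε : ε ≠ ⊤)
    (h : ∀ a, ∀ t ∈ Ioo (0 : ℝ) 1, φ a t ≤ ψ a t) (hb : ∀ t ∈ Ioo (0 : ℝ) 1, φ b t ≤ ε * ψ b t)
    {l : List α} (hl : b ∈ l) {x : ℝ} (hx : 0 ≤ x) :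
    iterLIntegral φ l x ≤ ε * iterLIntegral ψ l x := by
  induction l generalizing x with
  | nil => simp at hl
  | cons a l ih =>
    rw [iterLIntegral, iterLIntegral, ← lintegral_const_mul' _ _ hε]
    refine setLIntegral_mono' measurableSet_Ioo fun t ht => ?_
    have ht' : t ∈ Ioo (0 : ℝ) 1 := ⟨hx.trans_lt ht.1, ht.2⟩
    rcases List.mem_cons.1 hl with rfl | hl
    · calc φ b t * iterLIntegral φ l t ≤ ε * ψ b t * iterLIntegral ψ l t :=
            mul_le_mul' (hb t ht') (iterLIntegral_mono h l ht'.1.le)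
        _ = ε * (ψ b t * iterLIntegral ψ l t) := mul_assoc _ _ _
    · calc φ a t * iterLIntegral φ l t ≤ ψ a t * (ε * iterLIntegral ψ l t) :=
            mul_le_mul' (h a t ht') (ih hl ht'.1.le)
        _ = ε * (ψ a t * iterLIntegral ψ l t) := mul_left_comm _ _ _

end iterLIntegral

lemma ofReal_mul_le_of_le_mul_ofReal {m w : ℝ} (hm : 0 ≤ m) {J C : ℝ≥0∞}
    (h : J ≤ C * .ofReal w) : .ofReal m * J ≤ C * .ofReal (m * w) :=
  calc .ofReal m * J ≤ .ofReal m * (C * .ofReal w) := by gcongr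
    _ = C * .ofReal (m * w) := by rw [ENNReal.ofReal_mul hm, mul_left_comm]

lemma setLIntegral_Ioo_rpow_neg_three_halves_le {x : ℝ} (hx : x ∈ Ioo 0 1) :
    ∫⁻ t in Ioo x 1, .ofReal (t ^ (-(3 / 2) : ℝ)) ≤
      2 * .ofReal ((1 - x) * x ^ (-(1 / 2) : ℝ)) := by
  have hzero : (0 : ℝ) ∉ uIcc x 1 := by
    rw [uIcc_of_le hx.2.le]; exact fun h => hx.1.not_ge h.1
  have hint : IntegrableOn (fun t : ℝ => t ^ (-(3 / 2) : ℝ)) (Ioo x 1) :=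
    ((intervalIntegral.intervalIntegrable_rpow (Or.inr hzero)).1).mono_set Ioo_subset_Ioc_self
  have hsqrt : x * x ^ (-(1 / 2) : ℝ) ≤ 1 := by
    rw [← Real.rpow_one_add' hx.1.le (by norm_num)]
    exact Real.rpow_le_one hx.1.le hx.2.le (by norm_num)
  rw [← ofReal_integral_eq_lintegral_ofReal hint, integral_Ioc_eq_integral_Ioo.symm,
    ← intervalIntegral.integral_of_le hx.2.le, integral_rpow (Or.inr ⟨by norm_num, hzero⟩),
    ← ENNReal.ofReal_ofNat 2, ← ENNReal.ofReal_mul zero_le_two]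
  · apply ENNReal.ofReal_le_ofReal
    norm_num
    linarith
  · filter_upwards [ae_restrict_mem measurableSet_Ioo] with t ht
    exact Real.rpow_nonneg (hx.1.trans ht.1).le _

def majorant (a : Ltr) (t : ℝ) : ℝ := if a = 0 then t⁻¹ else if a = 1 then (1 - t)⁻¹ else 1

lemma majorant_nonneg {t : ℝ} (ht : t ∈ Ioo 0 1) (a : Ltr) : 0 ≤ majorant a t := by
  fin_cases a <;> simp [majorant] <;> linarith [ht.1, ht.2]

lemma majorant_le_of_ne_one {t : ℝ} (ht : t ∈ Ioo 0 1) {a : Ltr} (ha : a ≠ 1) :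
    majorant a t ≤ t ^ (-(3 / 2) : ℝ) := by
  have h0 : t⁻¹ ≤ t ^ (-(3 / 2) : ℝ) := by
    rw [← Real.rpow_neg_one]; exact Real.rpow_le_rpow_of_exponent_ge ht.1 ht.2.le (by norm_num)
  have h2 : 1 ≤ t ^ (-(3 / 2) : ℝ) :=
    Real.one_le_rpow_of_pos_of_le_one_of_nonpos ht.1 ht.2.le (by norm_num)
  fin_cases a <;> simp_all [majorant]

lemma majorant_mul_le {t : ℝ} (ht : t ∈ Ioo 0 1) (a : Ltr) :
    majorant a t * ((1 - t) * t ^ (-(1 / 2) : ℝ)) ≤ t ^ (-(3 / 2) : ℝ) := by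
  have hle : t ^ (-(1 / 2) : ℝ) ≤ t ^ (-(3 / 2) : ℝ) :=
    Real.rpow_le_rpow_of_exponent_ge ht.1 ht.2.le (by norm_num)
  have heq : t⁻¹ * t ^ (-(1 / 2) : ℝ) = t ^ (-(3 / 2) : ℝ) := by
    rw [← Real.rpow_neg_one, ← Real.rpow_add ht.1]; norm_num
  have hs : 0 ≤ t ^ (-(1 / 2) : ℝ) := Real.rpow_nonneg ht.1.le _
  have h1t : 0 < 1 - t := sub_pos.2 ht.2
  set s := t ^ (-(1 / 2) : ℝ)
  fin_cases a <;> simp only [majorant] <;> norm_num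
  · rw [← heq, mul_left_comm]
    exact mul_le_of_le_one_left (mul_nonneg (inv_nonneg.2 ht.1.le) hs) (by linarith [ht.1])
  · rw [inv_mul_cancel_left₀ h1t.ne']; exact hle
  · exact (mul_le_of_le_one_left hs (by linarith [ht.1])).trans hle

lemma majorant_mul_le_of_ne_zero {t : ℝ} (ht : t ∈ Ioo 0 1) {a : Ltr} (ha : a ≠ 0) :
    majorant a t * ((1 - t) * t ^ (-(1 / 2) : ℝ)) ≤ t ^ (-(1 / 2) : ℝ) := by
  have hs : 0 ≤ t ^ (-(1 / 2) : ℝ) := Real.rpow_nonneg ht.1.le _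
  have h1t : 0 < 1 - t := sub_pos.2 ht.2
  set s := t ^ (-(1 / 2) : ℝ)
  fin_cases a
  · exact absurd rfl ha
  · simp only [majorant]; norm_num; rw [inv_mul_cancel_left₀ h1t.ne']
  · simp only [majorant]; norm_num; exact mul_le_of_le_one_left hs (by linarith [ht.1])

abbrev majorantIntegral : List Ltr → ℝ → ℝ≥0∞ := iterLIntegral fun a t => .ofReal (majorant a t)

lemma majorantIntegral_le {l : List Ltr} (hl : l ≠ []) (hlast : l.getLast hl ≠ 1) {x : ℝ}
    (hx : x ∈ Ioo 0 1) :
    majorantIntegral l x ≤ 2 ^ l.length * .ofReal ((1 - x) * x ^ (-(1 / 2) : ℝ)) := by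
  induction l generalizing x with
  | nil => exact absurd rfl hl
  | cons a r ih =>
    have hpoint : ∀ t ∈ Ioo x 1, .ofReal (majorant a t) * majorantIntegral r t ≤
        2 ^ r.length * .ofReal (t ^ (-(3 / 2) : ℝ)) := by
      intro t ht
      have ht' : t ∈ Ioo 0 1 := ⟨hx.1.trans ht.1, ht.2⟩
      rcases eq_or_ne r [] with rfl | hr
      · simpa [majorantIntegral, iterLIntegral] using
          ENNReal.ofReal_le_ofReal (majorant_le_of_ne_one ht' hlast)
      · refine (ofReal_mul_le_of_le_mul_ofReal (majorant_nonneg ht' a)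
          (ih hr (by rwa [List.getLast_cons hr] at hlast) ht')).trans ?_
        gcongr
        exact majorant_mul_le ht' a
    calc majorantIntegral (a :: r) x
        ≤ ∫⁻ t in Ioo x 1, 2 ^ r.length * .ofReal (t ^ (-(3 / 2) : ℝ)) :=
          setLIntegral_mono' measurableSet_Ioo hpoint
      _ = 2 ^ r.length * ∫⁻ t in Ioo x 1, .ofReal (t ^ (-(3 / 2) : ℝ)) :=
          lintegral_const_mul' _ _ (by simp)
      _ ≤ 2 ^ r.length * (2 * .ofReal ((1 - x) * x ^ (-(1 / 2) : ℝ))) := by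
          gcongr; exact setLIntegral_Ioo_rpow_neg_three_halves_le hx
      _ = _ := by rw [List.length_cons, pow_succ, mul_assoc]

lemma majorantIntegral_lt_top {l : List Ltr} (hl : l ≠ []) (hhead : l.head hl ≠ 0)
    (hlast : l.getLast hl ≠ 1) : majorantIntegral l 0 < ⊤ := by
  obtain ⟨a, r, rfl⟩ := List.exists_cons_of_ne_nil hl
  rcases eq_or_ne r [] with rfl | hr
  · obtain rfl : a = 2 := by fin_cases a <;> simp_all
    simp [iterLIntegral, majorant]
  · have hpoint : ∀ t ∈ Ioo (0 : ℝ) 1, .ofReal (majorant a t) * majorantIntegral r t ≤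
        2 ^ r.length * .ofReal (t ^ (-(1 / 2) : ℝ)) := fun t ht =>
      (ofReal_mul_le_of_le_mul_ofReal (majorant_nonneg ht a)
        (majorantIntegral_le hr (by rwa [List.getLast_cons hr] at hlast) ht)).trans
        (by gcongr; exact majorant_mul_le_of_ne_zero ht (by simpa using hhead))
    calc majorantIntegral (a :: r) 0
        ≤ ∫⁻ t in Ioo 0 1, 2 ^ r.length * .ofReal (t ^ (-(1 / 2) : ℝ)) :=
          setLIntegral_mono' measurableSet_Ioo hpoint
      _ = 2 ^ r.length * ∫⁻ t in Ioo 0 1, .ofReal (t ^ (-(1 / 2) : ℝ)) :=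
          lintegral_const_mul' _ _ (by simp)
      _ < ⊤ := ENNReal.mul_lt_top (by simp) <|
          ((intervalIntegral.integrableOn_Ioo_rpow_iff zero_lt_one).2
            (by norm_num)).lintegral_lt_top

lemma norm_itInt_le (a : List ℂ) :
    ‖itInt a‖ ≤ (iterLIntegral (fun c t => .ofReal ‖((t : ℂ) - c)⁻¹‖) a 0).toReal := by
  rw [← setLIntegral_openSimplex_prod (fun c => by fun_prop)]
  refine (norm_integral_le_lintegral_norm _).trans_eq ?_
  simp only [norm_prod, ENNReal.ofReal_prod_of_nonneg fun i _ => norm_nonneg _]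
  rfl

lemma LL_wd (z : ℂ) (l : List Ltr) : LL z (wd l) = itInt (l.map (ev z)) := by
  simp [LL, wd]

lemma norm_inv_sub_le_two_div {z : ℂ} (hz : 2 ≤ ‖z‖) {t : ℝ} (ht : t ∈ Ioo 0 1) :
    ‖((t : ℂ) - z)⁻¹‖ ≤ 2 / ‖z‖ := by
  have hnorm_t : ‖(t : ℂ)‖ ≤ 1 := by
    rw [Complex.norm_real, Real.norm_of_nonneg ht.1.le]; exact ht.2.le
  have hlower : ‖z‖ / 2 ≤ ‖(t : ℂ) - z‖ := by
    have := norm_sub_norm_le z (t : ℂ)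
    rw [norm_sub_rev] at this
    linarith
  rw [norm_inv, ← inv_div]
  exact inv_anti₀ (by positivity) hlower

lemma norm_inv_sub_ev_le_majorant {z : ℂ} (hz : 2 ≤ ‖z‖) {t : ℝ} (ht : t ∈ Ioo 0 1) (a : Ltr) :
    ‖((t : ℂ) - ev z a)⁻¹‖ ≤ majorant a t := by
  fin_cases a
  · simp [ev, majorant, abs_of_pos ht.1]
  · show ‖((t : ℂ) - 1)⁻¹‖ ≤ (1 - t)⁻¹
    rw [← Complex.ofReal_one, ← Complex.ofReal_sub, norm_inv, Complex.norm_real,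
      Real.norm_of_nonpos (sub_nonpos.2 ht.2.le), neg_sub]
  · show ‖((t : ℂ) - z)⁻¹‖ ≤ 1
    exact (norm_inv_sub_le_two_div hz ht).trans ((div_le_one (by linarith)).2 hz)

lemma norm_LL_wd_le {z : ℂ} (hz : 2 ≤ ‖z‖) {l : List Ltr} (hl : 2 ∈ l)
    (hfin : majorantIntegral l 0 ≠ ⊤) :
    ‖LL z (wd l)‖ ≤ 2 / ‖z‖ * (majorantIntegral l 0).toReal := by
  have hbound : iterLIntegral (fun a t => .ofReal ‖((t : ℂ) - ev z a)⁻¹‖) l 0 ≤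
      .ofReal (2 / ‖z‖) * majorantIntegral l 0 :=
    iterLIntegral_le_mul_of_mem ENNReal.ofReal_ne_top
      (fun a t ht => ENNReal.ofReal_le_ofReal (norm_inv_sub_ev_le_majorant hz ht a))
      (fun t ht => by
        simpa [majorant, ev] using ENNReal.ofReal_le_ofReal (norm_inv_sub_le_two_div hz ht))
      hl le_rfl
  rw [LL_wd]
  refine (norm_itInt_le _).trans ?_
  rw [iterLIntegral_map, ← ENNReal.toReal_ofReal (by positivity : 0 ≤ 2 / ‖z‖),
    ← ENNReal.toReal_mul]
  exact ENNReal.toReal_mono (ENNReal.mul_ne_top ENNReal.ofReal_ne_top hfin) hbound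

open Filter in
/-- For an admissible word containing the letter `e_z`, `L(w)(z) → 0` as `|z| → ∞`. -/
theorem tendsto_zero_at_infty (l : List Ltr) (hez : (2 : Ltr) ∈ l) (ha : adm l) :
    Tendsto (fun z : ℂ => LL z (wd l))
      (comap (fun z : ℂ => ‖z‖) atTop ⊓ Filter.principal segᶜ) (nhds 0) := by
  have hl : l ≠ [] := List.ne_nil_of_mem hez
  obtain ⟨hhead, hlast⟩ := ha hl
  have hfin : majorantIntegral l 0 ≠ ⊤ :=
    (majorantIntegral_lt_top hl (by rcases hhead with h | h <;> simp [h])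
      (by rcases hlast with h | h <;> simp [h])).ne
  have hnorm : Tendsto (fun z : ℂ => ‖z‖) (comap (fun z : ℂ => ‖z‖) atTop ⊓ 𝓟 segᶜ) atTop :=
    tendsto_comap.mono_left inf_le_left
  refine squeeze_zero_norm'
    ((hnorm.eventually_ge_atTop 2).mono fun z hz => norm_LL_wd_le hz hez hfin) ?_
  simpa [div_eq_mul_inv] using
    (hnorm.inv_tendsto_atTop.const_mul 2).mul_const (majorantIntegral l 0).toReal

end
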